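/- arXiv:2003.00729 — 9 statements merged into one kernel-verified Lean document; each statement's English description precedes it below -/
import Mathlib

section
/- For every integer n ≥ 5, there exists a cyclic permutation a_1, a_2, ..., a_n of the integers 1, 2, ..., n such that |a_i - a_{i+1}| is prime for all 1 ≤ i ≤ n-1 and |a_n - a_1| is prime. -/
/-- `a 0, a 1, ..., a (n-1)` is a cyclic permutation (Hamilton cycle) of `{1,...,n}`
all of whose consecutive absolute differences (including the wrap-around one) are prime. -/
def IsPrimeDiffHamCycle (n : ℕ) (a : ℕ → ℤ) : Prop :=
  Set.BijOn a (Set.Ico 0 n) (Set.Icc 1 (n : ℤ)) ∧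
  (∀ i, i + 1 < n → ((a i - a (i + 1)).natAbs).Prime) ∧
  ((a (n - 1) - a 0).natAbs).Prime

def succFn (n : ℕ) (a : ℕ → ℤ) : ℕ → ℤ := fun k =>
  if k = 0 then (n : ℤ) + 4
  else if k = 1 then (n : ℤ) + 2
  else if k ≤ n + 1 then a ((n + 2 - k) % n)
  else if k = n + 2 then (n : ℤ) + 3
  else (n : ℤ) + 1

lemma succFn_mid (n : ℕ) (a : ℕ → ℤ) (k : ℕ) (h2 : 2 ≤ k) (h : k ≤ n + 1) :
    succFn n a k = a ((n + 2 - k) % n) := by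
  unfold succFn
  rw [if_neg (by omega), if_neg (by omega), if_pos h]

lemma succFn_top (n : ℕ) (a : ℕ → ℤ) : succFn n a (n + 3) = (n : ℤ) + 1 := by
  unfold succFn
  rw [if_neg (by omega), if_neg (by omega), if_neg (by omega), if_neg (by omega)]

lemma succFn_n2 (n : ℕ) (a : ℕ → ℤ) (hn : 1 ≤ n) : succFn n a (n + 2) = (n : ℤ) + 3 := by
  unfold succFn
  rw [if_neg (by omega), if_neg (by omega), if_neg (by omega), if_pos rfl]

lemma step (n : ℕ) (hn : 5 ≤ n) (a : ℕ → ℤ)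
    (himg : (Finset.range n).image a = Finset.Icc 1 (n : ℤ))
    (hdiff : ∀ i, i + 1 < n → ((a i - a (i + 1)).natAbs).Prime)
    (hwrap : ((a (n - 1) - a 0).natAbs).Prime)
    (h0 : a 0 = (n : ℤ)) (h1 : a 1 = (n : ℤ) - 2) :
    ∃ b : ℕ → ℤ,
      (Finset.range (n + 4)).image b = Finset.Icc 1 ((n + 4 : ℕ) : ℤ) ∧
      (∀ i, i + 1 < n + 4 → ((b i - b (i + 1)).natAbs).Prime) ∧
      ((b (n + 4 - 1) - b 0).natAbs).Prime ∧
      b 0 = ((n + 4 : ℕ) : ℤ) ∧ b 1 = ((n + 4 : ℕ) : ℤ) - 2 := by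
  have hIcc : ∀ j, j < n → 1 ≤ a j ∧ a j ≤ (n : ℤ) := by
    intro j hj
    have : a j ∈ (Finset.range n).image a :=
      Finset.mem_image_of_mem a (Finset.mem_range.2 hj)
    rw [himg, Finset.mem_Icc] at this
    exact this
  have e0 : succFn n a 0 = (n : ℤ) + 4 := by unfold succFn; rw [if_pos rfl]
  have e1 : succFn n a 1 = (n : ℤ) + 2 := by unfold succFn; rw [if_neg (by omega), if_pos rfl]
  have e2 : succFn n a 2 = a 0 := by
    rw [succFn_mid n a 2 le_rfl (by omega), show n + 2 - 2 = n from by omega, Nat.mod_self]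
  have e3 : succFn n a 3 = a (n - 1) := by
    rw [succFn_mid n a 3 (by omega) (by omega), show n + 2 - 3 = n - 1 from by omega,
      Nat.mod_eq_of_lt (by omega)]
  have emid : ∀ k, 3 ≤ k → k ≤ n + 1 → succFn n a k = a (n + 2 - k) := by
    intro k h3 hk
    rw [succFn_mid n a k (by omega) hk, Nat.mod_eq_of_lt (by omega)]
  have en1 : succFn n a (n + 1) = a 1 := by
    rw [emid (n + 1) (by omega) le_rfl, show n + 2 - (n + 1) = 1 from by omega]
  refine ⟨succFn n a, ?_, ?_, ?_, ?_, ?_⟩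
  · ext b
    simp only [Finset.mem_image, Finset.mem_range, Finset.mem_Icc]
    constructor
    · rintro ⟨k, hk, rfl⟩
      by_cases hk0 : k = 0
      · subst hk0; rw [e0]; push_cast; omega
      by_cases hk1 : k = 1
      · subst hk1; rw [e1]; push_cast; omega
      by_cases hkm : k ≤ n + 1
      · rw [succFn_mid n a k (by omega) hkm]
        have := hIcc ((n + 2 - k) % n) (Nat.mod_lt _ (by omega))
        push_cast; omega
      by_cases hk2 : k = n + 2
      · subst hk2; rw [succFn_n2 n a (by omega)]; push_cast; omega
      · have : k = n + 3 := by omega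
        subst this; rw [succFn_top]; push_cast; omega
    · rintro ⟨hb1, hb2⟩
      by_cases hbn : b ≤ (n : ℤ)
      · have : b ∈ (Finset.range n).image a := by
          rw [himg, Finset.mem_Icc]; exact ⟨hb1, hbn⟩
        obtain ⟨j, hj, rfl⟩ := Finset.mem_image.1 this
        rw [Finset.mem_range] at hj
        by_cases hj0 : j = 0
        · subst hj0; exact ⟨2, by omega, e2⟩
        · refine ⟨n + 2 - j, by omega, ?_⟩
          rw [emid (n + 2 - j) (by omega) (by omega), show n + 2 - (n + 2 - j) = j from by omega]
      · have hb : b = (n : ℤ) + 1 ∨ b = (n : ℤ) + 2 ∨ b = (n : ℤ) + 3 ∨ b = (n : ℤ) + 4 := by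
          push_cast at hb2; omega
        rcases hb with rfl | rfl | rfl | rfl
        · exact ⟨n + 3, by omega, succFn_top n a⟩
        · exact ⟨1, by omega, e1⟩
        · exact ⟨n + 2, by omega, succFn_n2 n a (by omega)⟩
        · exact ⟨0, by omega, e0⟩
  · intro i hi
    by_cases hi0 : i = 0
    · subst hi0; rw [e0, e1, show (n : ℤ) + 4 - ((n : ℤ) + 2) = 2 from by ring]; norm_num
    by_cases hi1 : i = 1
    · subst hi1
      rw [e1, e2, h0, show (n : ℤ) + 2 - (n : ℤ) = 2 from by ring]; norm_num
    by_cases hi2 : i = 2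
    · subst hi2
      rw [e2, e3, ← Int.natAbs_neg, neg_sub]
      exact hwrap
    by_cases hin1 : i = n + 1
    · subst hin1
      rw [en1, succFn_n2 n a (by omega), h1,
        show (n : ℤ) - 2 - ((n : ℤ) + 3) = -5 from by ring]
      norm_num
    by_cases hin2 : i = n + 2
    · subst hin2
      rw [succFn_n2 n a (by omega), succFn_top,
        show (n : ℤ) + 3 - ((n : ℤ) + 1) = 2 from by ring]
      norm_num
    · -- 3 ≤ i ≤ n
      have h3i : 3 ≤ i := by omega
      have hin : i ≤ n := by omega
      rw [emid i h3i (by omega), emid (i + 1) (by omega) (by omega),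
        show n + 2 - (i + 1) = n + 1 - i from by omega]
      have := hdiff (n + 1 - i) (by omega)
      rw [show n + 1 - i + 1 = n + 2 - i from by omega] at this
      rw [← Int.natAbs_neg, neg_sub]
      exact this
  · rw [show n + 4 - 1 = n + 3 from rfl, succFn_top, e0,
      show (n : ℤ) + 1 - ((n : ℤ) + 4) = -3 from by ring]
    norm_num
  · rw [e0]; push_cast; ring
  · rw [e1]; push_cast; ring

lemma bijOn_of_image_eq (n : ℕ) (a : ℕ → ℤ)
    (h : (Finset.range n).image a = Finset.Icc 1 (n : ℤ)) :
    Set.BijOn a (Set.Ico 0 n) (Set.Icc 1 (n : ℤ)) := by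
  have hdom : (Set.Ico 0 n : Set ℕ) = ↑(Finset.range n) := by
    ext x; simp
  have hinj : Set.InjOn a ↑(Finset.range n) :=
    Finset.injOn_of_card_image_eq (by rw [h, Int.card_Icc, Finset.card_range]; omega)
  refine ⟨?_, ?_, ?_⟩
  · intro x hx
    rw [hdom] at hx
    have : a x ∈ (Finset.range n).image a := Finset.mem_image_of_mem a hx
    rw [h, Finset.mem_Icc] at this
    exact this
  · rw [hdom]; exact hinj
  · intro b hb
    have : b ∈ (Finset.range n).image a := by
      rw [h, Finset.mem_Icc]; exact hb
    obtain ⟨k, hk, rfl⟩ := Finset.mem_image.1 this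
    exact ⟨k, by rw [hdom]; exact hk, rfl⟩

lemma key : ∀ n : ℕ, 5 ≤ n → ∃ a : ℕ → ℤ,
    (Finset.range n).image a = Finset.Icc 1 (n : ℤ) ∧
    (∀ i, i + 1 < n → ((a i - a (i + 1)).natAbs).Prime) ∧
    ((a (n - 1) - a 0).natAbs).Prime ∧ a 0 = (n : ℤ) ∧ a 1 = (n : ℤ) - 2 := by
  intro n
  induction n using Nat.strong_induction_on with
  | _ n ih =>
    intro hn
    by_cases h8 : n ≤ 8
    · interval_cases n
      · exact ⟨fun k => ([5, 3, 1, 4, 2] : List ℤ).getD k 0, by decide,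
          fun i hi => (by
            have h : i < 7 := by omega
            interval_cases i <;> first | decide | omega), by decide, by decide, by decide⟩
      · exact ⟨fun k => ([6, 4, 2, 5, 3, 1] : List ℤ).getD k 0, by decide,
          fun i hi => (by
            have h : i < 7 := by omega
            interval_cases i <;> first | decide | omega), by decide, by decide, by decide⟩
      · exact ⟨fun k => ([7, 5, 3, 1, 6, 4, 2] : List ℤ).getD k 0, by decide,
          fun i hi => (by
            have h : i < 7 := by omega
            interval_cases i <;> first | decide | omega), by decide, by decide, by decide⟩
      · exact ⟨fun k => ([8, 6, 4, 2, 7, 5, 3, 1] : List ℤ).getD k 0, by decide,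
          fun i hi => (by
            have h : i < 7 := by omega
            interval_cases i <;> first | decide | omega), by decide, by decide, by decide⟩
    · obtain ⟨a, himg, hdiff, hwrap, h0, h1⟩ := ih (n - 4) (by omega) (by omega)
      obtain ⟨b, hb⟩ := step (n - 4) (by omega) a himg hdiff hwrap h0 h1
      rw [show n - 4 + 4 = n from by omega] at hb
      exact ⟨b, hb⟩

theorem prime_diff_hamilton_cycle (n : ℕ) (hn : 5 ≤ n) :
    ∃ a : ℕ → ℤ, IsPrimeDiffHamCycle n a := by
  obtain ⟨a, himg, hdiff, hwrap, _, _⟩ := key n hn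
  exact ⟨a, bijOn_of_image_eq n a himg, hdiff, hwrap⟩
end

section
/- For every integer n ≥ 6, there exists a sequence a_1, a_2, ..., a_n listing each integer of {1,...,n} exactly once, with a_1 = 1, a_n = 2, and |a_i - a_{i+1}| prime for all 1 ≤ i ≤ n-1. -/
/-- `a 0, ..., a (n-1)` is a Hamilton path of `{1,...,n}` with all consecutive
absolute differences prime. -/
def IsPrimeDiffHamPath (n : ℕ) (a : ℕ → ℤ) : Prop :=
  Set.BijOn a (Set.Ico 0 n) (Set.Icc 1 (n : ℤ)) ∧
  (∀ i, i + 1 < n → ((a i - a (i + 1)).natAbs).Prime)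

/-!
Call a prime-difference Hamilton path of `{1, …, n}` from `1` to `2` *spliceable* if `n - 2` and
`n` are consecutive on it. Between them one can insert `n + 3, n + 1, n + 4, n + 2` (gaps
`5, 2, 3, 2, 2`), or the reverse block when the path runs from `n` to `n - 2`; the result is a
spliceable path of `{1, …, n + 4}`, since now `n + 2` and `n + 4` are consecutive. Four explicit
paths for `n = 6, 7, 8, 9` start the induction.
-/

open List

theorem List.IsChain.splice {α : Type*} {R : α → α → Prop} {l₁ l₂ m : List α} {a b : α}
    (h : (l₁ ++ a :: b :: l₂).IsChain R) (hm : (a :: (m ++ [b])).IsChain R) :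
    (l₁ ++ a :: (m ++ b :: l₂)).IsChain R := by
  rw [isChain_append_cons_cons] at h
  rw [isChain_split, isChain_cons_split]
  exact ⟨h.1, hm, h.2.2⟩

theorem List.perm_splice {α : Type*} [DecidableEq α] (l₁ l₂ m : List α) (a b : α) :
    (l₁ ++ a :: (m ++ b :: l₂)).Perm (l₁ ++ a :: b :: l₂ ++ m) :=
  by simpa using ((perm_append_comm (l₁ := m) (l₂ := b :: l₂)).cons a).append_left l₁

theorem List.Nodup.length_eq_of_mem_iff_Icc {l : List ℤ} {a b : ℤ} (h : l.Nodup)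
    (hmem : ∀ x, x ∈ l ↔ a ≤ x ∧ x ≤ b) : l.length = (b + 1 - a).toNat := by
  have : l.toFinset = Finset.Icc a b := by
    ext x
    rw [mem_toFinset, hmem, Finset.mem_Icc]
  rw [← toFinset_card_of_nodup h, this, Int.card_Icc]

def PrimeDiff (x y : ℤ) : Prop := (x - y).natAbs.Prime

instance : DecidableRel PrimeDiff := fun _ _ => inferInstanceAs (Decidable (Nat.Prime _))

theorem primeDiff_comm {x y : ℤ} : PrimeDiff x y ↔ PrimeDiff y x := by
  rw [PrimeDiff, PrimeDiff, ← Int.natAbs_neg, neg_sub]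

theorem isChain_primeDiff_reverse {l : List ℤ} :
    l.reverse.IsChain PrimeDiff ↔ l.IsChain PrimeDiff := by
  simp only [isChain_reverse, primeDiff_comm]

theorem isChain_primeDiff_block (N : ℤ) :
    ((N - 2) :: ([N + 3, N + 1, N + 4, N + 2] ++ [N])).IsChain PrimeDiff := by
  simp only [cons_append, nil_append, isChain_cons_cons, PrimeDiff]
  ring_nf
  norm_num

theorem isPrimeDiffHamPath_getD {n : ℕ} {l : List ℤ} (hchain : l.IsChain PrimeDiff)
    (hnodup : l.Nodup) (hmem : ∀ x, x ∈ l ↔ 1 ≤ x ∧ x ≤ n) :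
    IsPrimeDiffHamPath n (l.getD · 0) := by
  have hlen : l.length = n := by simpa using hnodup.length_eq_of_mem_iff_Icc hmem
  refine ⟨⟨fun i hi => ?_, fun i hi j hj hij => ?_, fun x hx => ?_⟩, fun i hi => ?_⟩
  · have hi : i < l.length := hlen ▸ hi.2
    rw [Set.mem_Icc, ← hmem]
    simpa only [getD_eq_getElem l 0 hi] using getElem_mem hi
  · have hi : i < l.length := hlen ▸ hi.2
    have hj : j < l.length := hlen ▸ hj.2
    simpa only [getD_eq_getElem l 0 hi, getD_eq_getElem l 0 hj, hnodup.getElem_inj_iff] using hij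
  · obtain ⟨i, hi, rfl⟩ := mem_iff_getElem.1 ((hmem x).2 hx)
    exact ⟨i, ⟨i.zero_le, hlen ▸ hi⟩, getD_eq_getElem l 0 hi⟩
  · have hi' : i + 1 < l.length := hlen ▸ hi
    simpa only [getD_eq_getElem l 0 hi', getD_eq_getElem l 0 (Nat.lt_of_succ_lt hi'),
      PrimeDiff] using isChain_iff_getElem.1 hchain i hi'

structure IsSpliceablePath (n : ℕ) (l : List ℤ) : Prop where
  isChain : l.IsChain PrimeDiff
  nodup : l.Nodup
  mem_iff : ∀ x, x ∈ l ↔ 1 ≤ x ∧ x ≤ n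
  head? : l.head? = some 1
  getLast? : l.getLast? = some 2
  adjacent : [(n : ℤ) - 2, n] <:+: l ∨ [(n : ℤ), n - 2] <:+: l

namespace IsSpliceablePath

theorem splice {n : ℕ} {l₁ l₂ m : List ℤ} {a b : ℤ} (h : IsSpliceablePath n (l₁ ++ a :: b :: l₂))
    (hm_chain : (a :: (m ++ [b])).IsChain PrimeDiff) (hm_nodup : m.Nodup)
    (hm_mem : ∀ x, x ∈ m ↔ n + 1 ≤ x ∧ x ≤ n + 4)
    (hm_adj : [(n : ℤ) + 2, n + 4] <:+: m ∨ [(n : ℤ) + 4, n + 2] <:+: m) :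
    IsSpliceablePath (n + 4) (l₁ ++ a :: (m ++ b :: l₂)) := by
  have hperm := perm_splice l₁ l₂ m a b
  have hmem : ∀ x, x ∈ l₁ ++ a :: (m ++ b :: l₂) ↔ (1 ≤ x ∧ x ≤ n) ∨ (n + 1 ≤ x ∧ x ≤ n + 4) := by
    intro x
    rw [hperm.mem_iff, mem_append, h.mem_iff, hm_mem]
  have hm_infix : m <:+: l₁ ++ a :: (m ++ b :: l₂) := ⟨l₁ ++ [a], b :: l₂, by simp⟩
  refine ⟨h.isChain.splice hm_chain, ?_, fun x => ?_, ?_, ?_, ?_⟩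
  · rw [hperm.nodup_iff, nodup_append]
    refine ⟨h.nodup, hm_nodup, fun x hx y hy => ?_⟩
    have := (h.mem_iff x).1 hx
    have := (hm_mem y).1 hy
    omega
  · rw [hmem]
    push_cast
    omega
  · cases l₁ <;> simpa using h.head?
  · have hlast := h.getLast?
    rw [getLast?_append_cons, getLast?_cons_cons] at hlast
    rw [getLast?_append_cons, ← cons_append, getLast?_append_cons, hlast]
  · push_cast
    rw [show (n : ℤ) + 4 - 2 = n + 2 by ring]
    exact hm_adj.imp (·.trans hm_infix) (·.trans hm_infix)

theorem exists_add_four {n : ℕ} {l : List ℤ} (h : IsSpliceablePath n l) :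
    ∃ l', IsSpliceablePath (n + 4) l' := by
  have hblock := isChain_primeDiff_block n
  rcases h.adjacent with ⟨l₁, l₂, hl⟩ | ⟨l₁, l₂, hl⟩
  · simp only [append_assoc, cons_append, nil_append] at hl
    subst hl
    refine ⟨_, h.splice hblock ?_ (fun x => ?_) (.inr ⟨[n + 3, n + 1], [], by simp⟩)⟩
    · simp
    · simp only [mem_cons, not_mem_nil, or_false]
      omega
  · simp only [append_assoc, cons_append, nil_append] at hl
    subst hl
    refine ⟨_, h.splice (m := [n + 2, n + 4, n + 1, n + 3]) ?_ ?_ (fun x => ?_)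
      (.inl ⟨[], [n + 1, n + 3], rfl⟩)⟩
    · simpa using isChain_primeDiff_reverse.2 hblock
    · simp
    · simp only [mem_cons, not_mem_nil, or_false]
      omega

theorem exists_of_le_nine {n : ℕ} (h6 : 6 ≤ n) (h9 : n ≤ 9) : ∃ l, IsSpliceablePath n l := by
  interval_cases n
  · exact ⟨[1, 4, 6, 3, 5, 2], by decide, by decide,
      fun _ => by simp only [mem_cons, not_mem_nil, or_false]; omega, rfl, rfl, by decide⟩
  · exact ⟨[1, 3, 6, 4, 7, 5, 2], by decide, by decide,
      fun _ => by simp only [mem_cons, not_mem_nil, or_false]; omega, rfl, rfl, by decide⟩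
  · exact ⟨[1, 3, 6, 8, 5, 7, 4, 2], by decide, by decide,
      fun _ => by simp only [mem_cons, not_mem_nil, or_false]; omega, rfl, rfl, by decide⟩
  · exact ⟨[1, 3, 6, 8, 5, 7, 9, 4, 2], by decide, by decide,
      fun _ => by simp only [mem_cons, not_mem_nil, or_false]; omega, rfl, rfl, by decide⟩

theorem exists_of_six_le {n : ℕ} (hn : 6 ≤ n) : ∃ l, IsSpliceablePath n l := by
  induction n using Nat.strong_induction_on with
  | _ n ih =>
    by_cases h9 : n ≤ 9
    · exact exists_of_le_nine hn h9
    · obtain ⟨l, hl⟩ := ih (n - 4) (by omega) (by omega)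
      rw [← Nat.sub_add_cancel (by omega : 4 ≤ n)]
      exact hl.exists_add_four

theorem length_eq {n : ℕ} {l : List ℤ} (h : IsSpliceablePath n l) : l.length = n := by
  simpa using h.nodup.length_eq_of_mem_iff_Icc h.mem_iff

theorem getD_zero {n : ℕ} {l : List ℤ} (h : IsSpliceablePath n l) : l.getD 0 0 = 1 := by
  rw [getD_eq_getElem?_getD, ← head?_eq_getElem?, h.head?, Option.getD_some]

theorem getD_pred {n : ℕ} {l : List ℤ} (h : IsSpliceablePath n l) : l.getD (n - 1) 0 = 2 := by
  rw [getD_eq_getElem?_getD, ← h.length_eq, ← getLast?_eq_getElem?, h.getLast?, Option.getD_some]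

end IsSpliceablePath

theorem prime_diff_ham_path_one_two (n : ℕ) (hn : 6 ≤ n) :
    ∃ a : ℕ → ℤ, IsPrimeDiffHamPath n a ∧ a 0 = 1 ∧ a (n - 1) = 2 := by
  obtain ⟨l, hl⟩ := IsSpliceablePath.exists_of_six_le hn
  exact ⟨(l.getD · 0), isPrimeDiffHamPath_getD hl.isChain hl.nodup hl.mem_iff,
    hl.getD_zero, hl.getD_pred⟩
end

section
/- For n = 8, the prime difference graph G_8 contains a Hamilton path from n_1 to n_2 for every pair with 1 ≤ n_1 < n_2 ≤ 8 except the pair (4,5), for which no such Hamilton path exists. -/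
namespace IsPrimeDiffHamPath

variable {n : ℕ} {a : ℕ → ℤ}

theorem of_perm_of_isChain {l : List ℤ}
    (hperm : l.Perm ((List.range n).map fun k : ℕ => (k + 1 : ℤ)))
    (hchain : l.IsChain fun x y => (x - y).natAbs.Prime) :
    IsPrimeDiffHamPath n fun i => l.getD i 0 := by
  have hlen : l.length = n := by simpa using hperm.length_eq
  have hmem : ∀ v, v ∈ l ↔ v ∈ Set.Icc 1 (n : ℤ) := by
    intro v
    simp only [hperm.mem_iff, List.mem_map, List.mem_range, Set.mem_Icc]
    constructor
    · rintro ⟨k, hk, rfl⟩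
      omega
    · rintro ⟨hv1, hvn⟩
      exact ⟨(v - 1).toNat, by omega, by omega⟩
  have hnodup : l.Nodup :=
    hperm.nodup_iff.mpr (List.nodup_range.map fun _ _ h => by simpa using h)
  refine ⟨⟨fun i hi => ?_, fun i hi j hj hij => ?_, fun v hv => ?_⟩, fun i hi => ?_⟩
  · rw [Set.mem_Ico] at hi
    simp only [List.getD_eq_getElem l 0 (hlen ▸ hi.2)]
    exact (hmem _).1 (List.getElem_mem _)
  · rw [Set.mem_Ico] at hi hj
    simp only [List.getD_eq_getElem l 0 (hlen ▸ hi.2), List.getD_eq_getElem l 0 (hlen ▸ hj.2)]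
      at hij
    exact hnodup.getElem_inj_iff.mp hij
  · obtain ⟨i, hi, rfl⟩ := List.mem_iff_getElem.mp ((hmem v).2 hv)
    exact ⟨i, ⟨i.zero_le, hlen ▸ hi⟩, List.getD_eq_getElem l 0 hi⟩
  · dsimp only
    rw [List.getD_eq_getElem l 0 (by omega), List.getD_eq_getElem l 0 (by omega)]
    exact List.isChain_iff_getElem.mp hchain i (by omega)

theorem exists_interior_neighbors (h : IsPrimeDiffHamPath n a) {v : ℤ}
    (hv : v ∈ Set.Icc 1 (n : ℤ)) (hfirst : a 0 ≠ v) (hlast : a (n - 1) ≠ v) :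
    ∃ k, k + 2 < n ∧ a (k + 1) = v ∧ (a k - v).natAbs.Prime ∧ (a (k + 2) - v).natAbs.Prime := by
  obtain ⟨i, hi, rfl⟩ := h.1.surjOn hv
  rw [Set.mem_Ico] at hi
  rcases i with _ | k
  · exact absurd rfl hfirst
  have hk : k + 2 < n := by
    by_contra hk
    exact hlast (congrArg a (by omega))
  refine ⟨k, hk, rfl, h.2 k (by omega), ?_⟩
  rw [← Int.natAbs_neg, neg_sub]
  exact h.2 (k + 1) hk

end IsPrimeDiffHamPath

theorem neighbor_mem_of_two_or_seven {v x : ℤ} (hv : v = 2 ∨ v = 7) (hx : x ∈ Set.Icc 1 8)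
    (hp : (x - v).natAbs.Prime) : x ∈ ({2, 4, 5, 7} : Set ℤ) := by
  obtain ⟨hx1, hx8⟩ := hx
  revert hp
  interval_cases x <;> rcases hv with rfl | rfl <;> norm_num

theorem not_isPrimeDiffHamPath_from_four_to_five (a : ℕ → ℤ) :
    ¬(IsPrimeDiffHamPath 8 a ∧ a 0 = 4 ∧ a 7 = 5) := by
  rintro ⟨h, ha0, ha7⟩
  obtain ⟨i, hi, hai, hil, hir⟩ :=
    h.exists_interior_neighbors (v := 2) (by norm_num) (by simp [ha0]) (by simp [ha7])
  obtain ⟨j, hj, haj, hjl, hjr⟩ :=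
    h.exists_interior_neighbors (v := 7) (by norm_num) (by simp [ha0]) (by simp [ha7])
  have index : ∀ p < 8, ∀ v : ℤ, (v = 2 ∨ v = 7) → (a p - v).natAbs.Prime →
      p = i + 1 ∨ p = 0 ∨ p = 7 ∨ p = j + 1 := by
    intro p hp v hv hprime
    have hsub : ({i + 1, 0, 7, j + 1} : Set ℕ) ⊆ Set.Ico 0 8 := by
      intro q hq
      simp only [Set.mem_insert_iff, Set.mem_singleton_iff] at hq
      simp only [Set.mem_Ico]
      omega
    have hp' : p ∈ Set.Ico 0 8 := by simpa using hp
    have himage : ({2, 4, 5, 7} : Set ℤ) = a '' {i + 1, 0, 7, j + 1} := by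
      simp only [Set.image_insert_eq, Set.image_singleton, hai, ha0, ha7, haj]
    have hval := neighbor_mem_of_two_or_seven hv (h.1.mapsTo hp') hprime
    rw [himage, h.1.injOn.mem_image_iff hsub hp'] at hval
    simpa using hval
  have hleft2 := index i (by omega) 2 (.inl rfl) hil
  have hright2 := index (i + 2) hi 2 (.inl rfl) hir
  have hleft7 := index j (by omega) 7 (.inr rfl) hjl
  have hright7 := index (j + 2) hj 7 (.inr rfl) hjr
  omega

def hamPathWitnesses : List (List ℤ) :=
  [[1,3,5,8,6,4,7,2], [1,4,2,7,5,8,6,3], [1,3,6,8,5,2,7,4], [1,3,8,6,4,2,7,5],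
   [1,3,8,5,2,7,4,6], [1,3,5,8,6,4,2,7], [1,3,5,2,7,4,6,8], [2,4,7,5,8,1,6,3],
   [2,7,5,3,1,8,6,4], [2,7,4,1,3,6,8,5], [2,4,7,5,3,1,8,6], [2,4,1,3,6,8,5,7],
   [2,4,7,5,3,1,6,8], [3,1,6,8,5,2,7,4], [3,1,8,6,4,2,7,5], [3,1,4,2,7,5,8,6],
   [3,1,4,6,8,5,2,7], [3,1,6,4,2,7,5,8], [4,2,7,5,3,1,8,6], [4,1,3,6,8,5,2,7],
   [4,2,7,5,3,1,6,8], [5,2,7,4,1,3,8,6], [5,3,1,8,6,4,2,7], [5,2,7,4,1,3,6,8],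
   [6,1,3,8,5,2,4,7], [6,1,4,2,7,5,3,8], [7,2,4,1,6,3,5,8]]

theorem hamPathWitnesses_perm_isChain : ∀ l ∈ hamPathWitnesses,
    l.Perm ((List.range 8).map fun k : ℕ => (k + 1 : ℤ)) ∧
      l.IsChain fun x y => (x - y).natAbs.Prime := by
  decide

set_option synthInstance.maxSize 1000 in
theorem exists_mem_hamPathWitnesses : ∀ n₂ : ℕ, n₂ < 9 → ∀ n₁ : ℕ, n₁ < n₂ → 1 ≤ n₁ →
    (n₁, n₂) ≠ (4, 5) →
      ∃ l ∈ hamPathWitnesses, l[0]? = some (n₁ : ℤ) ∧ l[7]? = some (n₂ : ℤ) := by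
  decide

theorem prime_diff_ham_path_G8_characterization (n₁ n₂ : ℕ)
    (h1 : 1 ≤ n₁) (h12 : n₁ < n₂) (h2 : n₂ ≤ 8) :
    (∃ a : ℕ → ℤ, IsPrimeDiffHamPath 8 a ∧ a 0 = n₁ ∧ a 7 = n₂) ↔
      (n₁, n₂) ≠ (4, 5) := by
  constructor
  · rintro ⟨a, h, ha0, ha7⟩ h45
    obtain ⟨rfl, rfl⟩ := Prod.mk.inj h45
    exact not_isPrimeDiffHamPath_from_four_to_five a ⟨h, ha0, ha7⟩
  · intro hne
    obtain ⟨l, hl, hl0, hl7⟩ := exists_mem_hamPathWitnesses n₂ (by omega) n₁ h12 h1 hne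
    obtain ⟨hperm, hchain⟩ := hamPathWitnesses_perm_isChain l hl
    exact ⟨_, .of_perm_of_isChain hperm hchain, by simp [List.getD_eq_getElem?_getD, hl0],
      by simp [List.getD_eq_getElem?_getD, hl7]⟩
end

section
/- For every n ≥ 6, there exists a bijective sequence a_1, ..., a_n of {1,...,n} such that |a_i - a_{i+1}| ∈ {2, 3} for all 1 ≤ i ≤ n-1 (a Hamilton path using only differences 2 and 3). -/
/-!
Grow the path two vertices at a time: a path through `1, …, n` with steps `2` or `3` that starts
at `n - 1` and ends at `n` extends to one for `n + 2` by putting `n + 1` in front and `n + 2` at the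
end (both new steps have length `2`). The bases are `5 2 4 1 3 6` and `6 3 1 4 2 5 7`.
-/

theorem List.Nodup.bijOn_getD {α : Type*} {l : List α} (hl : l.Nodup) (d : α) :
    Set.BijOn (fun i => l.getD i d) (Set.Ico 0 l.length) {x | x ∈ l} := by
  refine ⟨fun i ⟨_, hi⟩ => ?_, fun i ⟨_, hi⟩ j ⟨_, hj⟩ hij => ?_, fun x hx => ?_⟩
  · show l.getD i d ∈ l
    rw [List.getD_eq_getElem _ _ hi]
    exact l.getElem_mem hi
  · dsimp only at hij
    rw [List.getD_eq_getElem _ _ hi, List.getD_eq_getElem _ _ hj] at hij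
    exact hl.getElem_inj_iff.1 hij
  · obtain ⟨i, hi, rfl⟩ := List.mem_iff_getElem.1 hx
    exact ⟨i, ⟨i.zero_le, hi⟩, List.getD_eq_getElem _ _ hi⟩

theorem List.IsChain.rel_getD {α : Type*} {R : α → α → Prop} {l : List α} (hl : l.IsChain R)
    (d : α) {i : ℕ} (hi : i + 1 < l.length) : R (l.getD i d) (l.getD (i + 1) d) := by
  rw [List.getD_eq_getElem _ _ hi, List.getD_eq_getElem _ _ (Nat.lt_of_succ_lt hi)]
  exact hl.getElem i hi

def DiffTwoOrThree (x y : ℤ) : Prop := (x - y).natAbs = 2 ∨ (x - y).natAbs = 3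

instance : DecidableRel DiffTwoOrThree := fun x y => by unfold DiffTwoOrThree; infer_instance

structure IsHamPathEndingAt (n : ℤ) (l : List ℤ) : Prop where
  isChain : l.IsChain DiffTwoOrThree
  nodup : l.Nodup
  mem_iff : ∀ x, x ∈ l ↔ x ∈ Set.Icc 1 n
  head? : l.head? = some (n - 1)
  getLast? : l.getLast? = some n

namespace IsHamPathEndingAt

theorem six : IsHamPathEndingAt 6 [5, 2, 4, 1, 3, 6] where
  isChain := by decide
  nodup := by decide
  mem_iff x := by simp only [List.mem_cons, List.not_mem_nil, or_false, Set.mem_Icc]; omega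
  head? := rfl
  getLast? := rfl

theorem seven : IsHamPathEndingAt 7 [6, 3, 1, 4, 2, 5, 7] where
  isChain := by decide
  nodup := by decide
  mem_iff x := by simp only [List.mem_cons, List.not_mem_nil, or_false, Set.mem_Icc]; omega
  head? := rfl
  getLast? := rfl

variable {n : ℤ} {l : List ℤ}

theorem one_le (h : IsHamPathEndingAt n l) : 1 ≤ n :=
  ((h.mem_iff n).1 (List.mem_of_getLast? h.getLast?)).1

theorem length_eq (h : IsHamPathEndingAt n l) : l.length = n.toNat := by
  have : l.toFinset = Finset.Icc 1 n := by
    ext x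
    simp [h.mem_iff]
  rw [← List.toFinset_card_of_nodup h.nodup, this, Int.card_Icc, add_sub_cancel_right]

theorem extend (h : IsHamPathEndingAt n l) :
    IsHamPathEndingAt (n + 2) ((n + 1) :: l ++ [n + 2]) where
  isChain := by
    refine (h.isChain.cons ?_).append (List.isChain_singleton _) ?_
    · simp [h.head?, DiffTwoOrThree]
    · have : ((n + 1) :: l).getLast? = some n := by
        rw [List.getLast?_cons, h.getLast?]; rfl
      simp [this, DiffTwoOrThree]
  nodup := by
    have hlt : ∀ x ∈ l, x < n + 1 := fun x hx => ((h.mem_iff x).1 hx).2.trans_lt (lt_add_one n)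
    refine List.nodup_append.2 ⟨List.nodup_cons.2 ⟨fun hmem => (hlt _ hmem).false, h.nodup⟩,
      List.nodup_singleton _, ?_⟩
    simp only [List.mem_cons]
    grind
  mem_iff x := by
    simp only [List.cons_append, List.mem_cons, List.mem_append, h.mem_iff, List.not_mem_nil,
      or_false, Set.mem_Icc]
    have := h.one_le
    omega
  head? := by simp only [List.cons_append, List.head?_cons]; ring_nf
  getLast? := List.getLast?_concat ..

end IsHamPathEndingAt

theorem exists_isHamPathEndingAt {n : ℕ} (hn : 6 ≤ n) : ∃ l, IsHamPathEndingAt n l := by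
  induction n using Nat.strong_induction_on with
  | _ n ih =>
    rcases (by omega : n = 6 ∨ n = 7 ∨ 8 ≤ n) with rfl | rfl | h8
    · exact ⟨_, .six⟩
    · exact ⟨_, .seven⟩
    · obtain ⟨m, rfl⟩ : ∃ m, n = m + 2 := ⟨n - 2, by omega⟩
      obtain ⟨l, hl⟩ := ih m (by omega) (by omega)
      exact ⟨_, mod_cast hl.extend⟩

/-- For every `n ≥ 6` there is a Hamilton path of `{1,...,n}` all of whose
consecutive absolute differences are `2` or `3`. -/
theorem ham_path_diffs_two_three (n : ℕ) (hn : 6 ≤ n) :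
    ∃ a : ℕ → ℤ, Set.BijOn a (Set.Ico 0 n) (Set.Icc 1 (n : ℤ)) ∧
      ∀ i, i + 1 < n → (a i - a (i + 1)).natAbs = 2 ∨ (a i - a (i + 1)).natAbs = 3 := by
  obtain ⟨l, hl⟩ := exists_isHamPathEndingAt hn
  have hlen : l.length = n := by simpa using hl.length_eq
  have hrange : {x | x ∈ l} = Set.Icc 1 (n : ℤ) := Set.ext hl.mem_iff
  refine ⟨fun i => l.getD i 0, ?_, fun i hi => hl.isChain.rel_getD 0 (hlen ▸ hi)⟩
  simpa only [hlen, hrange] using hl.nodup.bijOn_getD 0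
end

section
/- For every n ≥ 10, there exists a cyclic permutation a_1, ..., a_n of {1,...,n} such that |a_i - a_{i+1}| ∈ {2, 3} for all 1 ≤ i ≤ n-1 and |a_n - a_1| ∈ {2, 3}. -/
set_option maxHeartbeats 1000000

private def cycE (m : ℕ) : ℕ → ℤ := fun i =>
  if i + 4 < m then 5 + 2 * (i : ℤ)
  else if i + 4 = m then 2 * (m : ℤ) - 2
  else if i + 3 = m then 2 * (m : ℤ)
  else if i + 2 = m then 2 * (m : ℤ) - 3
  else if i + 1 = m then 2 * (m : ℤ) - 1
  else if i + 4 < 2 * m then 4 * (m : ℤ) - 4 - 2 * (i : ℤ)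
  else if i + 4 = 2 * m then 3
  else if i + 3 = 2 * m then 1
  else if i + 2 = 2 * m then 4
  else 2

private def cycO (m : ℕ) : ℕ → ℤ := fun i =>
  if i + 3 < m then 5 + 2 * (i : ℤ)
  else if i + 3 = m then 2 * (m : ℤ)
  else if i + 2 = m then 2 * (m : ℤ) - 2
  else if i + 1 = m then 2 * (m : ℤ) + 1
  else if i = m then 2 * (m : ℤ) - 1
  else if i + 4 ≤ 2 * m then 4 * (m : ℤ) - 2 - 2 * (i : ℤ)
  else if i + 3 = 2 * m then 3
  else if i + 2 = 2 * m then 1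
  else if i + 1 = 2 * m then 4
  else 2

private lemma cycE_spec (m : ℕ) (i : ℕ) :
    (i + 4 < m ∧ cycE m i = 5 + 2 * (i : ℤ)) ∨
    (i + 4 = m ∧ cycE m i = 2 * (m : ℤ) - 2) ∨
    (i + 3 = m ∧ cycE m i = 2 * (m : ℤ)) ∨
    (i + 2 = m ∧ cycE m i = 2 * (m : ℤ) - 3) ∨
    (i + 1 = m ∧ cycE m i = 2 * (m : ℤ) - 1) ∨
    (m ≤ i ∧ i + 4 < 2 * m ∧ cycE m i = 4 * (m : ℤ) - 4 - 2 * (i : ℤ)) ∨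
    (m ≤ i + 4 ∧ i + 4 = 2 * m ∧ cycE m i = 3) ∨
    (m ≤ i + 3 ∧ i + 3 = 2 * m ∧ cycE m i = 1) ∨
    (m ≤ i + 2 ∧ i + 2 = 2 * m ∧ cycE m i = 4) ∨
    (m ≤ i + 1 ∧ 2 * m ≤ i + 1 ∧ cycE m i = 2) := by
  simp only [cycE]
  split_ifs with h1 h2 h3 h4 h5 h6 h7 h8 h9
  · exact Or.inl ⟨h1, rfl⟩
  · exact Or.inr (Or.inl ⟨h2, rfl⟩)
  · exact Or.inr (Or.inr (Or.inl ⟨h3, rfl⟩))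
  · exact Or.inr (Or.inr (Or.inr (Or.inl ⟨h4, rfl⟩)))
  · exact Or.inr (Or.inr (Or.inr (Or.inr (Or.inl ⟨h5, rfl⟩))))
  · exact Or.inr (Or.inr (Or.inr (Or.inr (Or.inr (Or.inl ⟨by omega, h6, rfl⟩)))))
  · exact Or.inr (Or.inr (Or.inr (Or.inr (Or.inr (Or.inr (Or.inl ⟨by omega, h7, rfl⟩))))))
  · exact Or.inr (Or.inr (Or.inr (Or.inr (Or.inr (Or.inr (Or.inr (Or.inl ⟨by omega, h8, rfl⟩)))))))
  · exact Or.inr (Or.inr (Or.inr (Or.inr (Or.inr (Or.inr (Or.inr (Or.inr (Or.inl ⟨by omega, h9, rfl⟩))))))))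
  · exact Or.inr (Or.inr (Or.inr (Or.inr (Or.inr (Or.inr (Or.inr (Or.inr (Or.inr ⟨by omega, by omega, rfl⟩))))))))

private lemma cycO_spec (m : ℕ) (i : ℕ) :
    (i + 3 < m ∧ cycO m i = 5 + 2 * (i : ℤ)) ∨
    (i + 3 = m ∧ cycO m i = 2 * (m : ℤ)) ∨
    (i + 2 = m ∧ cycO m i = 2 * (m : ℤ) - 2) ∨
    (i + 1 = m ∧ cycO m i = 2 * (m : ℤ) + 1) ∨
    (i = m ∧ cycO m i = 2 * (m : ℤ) - 1) ∨
    (m < i ∧ i + 4 ≤ 2 * m ∧ cycO m i = 4 * (m : ℤ) - 2 - 2 * (i : ℤ)) ∨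
    (m ≤ i + 3 ∧ i + 3 = 2 * m ∧ cycO m i = 3) ∨
    (m ≤ i + 2 ∧ i + 2 = 2 * m ∧ cycO m i = 1) ∨
    (m ≤ i + 1 ∧ i + 1 = 2 * m ∧ cycO m i = 4) ∨
    (m ≤ i ∧ 2 * m ≤ i ∧ cycO m i = 2) := by
  simp only [cycO]
  split_ifs with h1 h2 h3 h4 h5 h6 h7 h8 h9
  · exact Or.inl ⟨h1, rfl⟩
  · exact Or.inr (Or.inl ⟨h2, rfl⟩)
  · exact Or.inr (Or.inr (Or.inl ⟨h3, rfl⟩))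
  · exact Or.inr (Or.inr (Or.inr (Or.inl ⟨h4, rfl⟩)))
  · exact Or.inr (Or.inr (Or.inr (Or.inr (Or.inl ⟨h5, rfl⟩))))
  · exact Or.inr (Or.inr (Or.inr (Or.inr (Or.inr (Or.inl ⟨by omega, h6, rfl⟩)))))
  · exact Or.inr (Or.inr (Or.inr (Or.inr (Or.inr (Or.inr (Or.inl ⟨by omega, h7, rfl⟩))))))
  · exact Or.inr (Or.inr (Or.inr (Or.inr (Or.inr (Or.inr (Or.inr (Or.inl ⟨by omega, h8, rfl⟩)))))))
  · exact Or.inr (Or.inr (Or.inr (Or.inr (Or.inr (Or.inr (Or.inr (Or.inr (Or.inl ⟨by omega, h9, rfl⟩))))))))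
  · exact Or.inr (Or.inr (Or.inr (Or.inr (Or.inr (Or.inr (Or.inr (Or.inr (Or.inr ⟨by omega, by omega, rfl⟩))))))))

/-- For every `n ≥ 10` there is a Hamilton cycle of `{1,...,n}` (a cyclic permutation)
all of whose consecutive absolute differences, including the wrap-around one, are `2` or `3`. -/
theorem ham_cycle_diffs_two_three (n : ℕ) (hn : 10 ≤ n) :
    ∃ a : ℕ → ℤ, Set.BijOn a (Set.Ico 0 n) (Set.Icc 1 (n : ℤ)) ∧
      (∀ i, i + 1 < n → (a i - a (i + 1)).natAbs = 2 ∨ (a i - a (i + 1)).natAbs = 3) ∧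
      ((a (n - 1) - a 0).natAbs = 2 ∨ (a (n - 1) - a 0).natAbs = 3) := by
  obtain ⟨m, hm⟩ : ∃ m, n = 2 * m ∨ n = 2 * m + 1 := ⟨n / 2, by omega⟩
  have hm5 : 5 ≤ m := by omega
  have hcase : ∀ y : ℤ, 1 ≤ y → y ≤ n → y = 1 ∨ y = 2 ∨ y = 3 ∨ y = 4 ∨ y = n ∨
      y = (n : ℤ) - 1 ∨ y = (n : ℤ) - 2 ∨ y = (n : ℤ) - 3 ∨
      (∃ t : ℕ, y = 5 + 2 * (t : ℤ) ∧ y ≤ (n : ℤ) - 4) ∨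
      (∃ t : ℕ, y = 6 + 2 * (t : ℤ) ∧ y ≤ (n : ℤ) - 4) := by
    intro y hy1 hy2
    by_cases e1 : y = 1
    · exact Or.inl e1
    · by_cases e2 : y = 2
      · exact Or.inr (Or.inl e2)
      · by_cases e3 : y = 3
        · exact Or.inr (Or.inr (Or.inl e3))
        · by_cases e4 : y = 4
          · exact Or.inr (Or.inr (Or.inr (Or.inl e4)))
          · by_cases e5 : y = n
            · exact Or.inr (Or.inr (Or.inr (Or.inr (Or.inl e5))))
            · by_cases e6 : y = (n : ℤ) - 1
              · exact Or.inr (Or.inr (Or.inr (Or.inr (Or.inr (Or.inl e6)))))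
              · by_cases e7 : y = (n : ℤ) - 2
                · exact Or.inr (Or.inr (Or.inr (Or.inr (Or.inr (Or.inr (Or.inl e7))))))
                · by_cases e8 : y = (n : ℤ) - 3
                  · exact Or.inr (Or.inr (Or.inr (Or.inr (Or.inr (Or.inr (Or.inr (Or.inl e8)))))))
                  · rcases Int.even_or_odd y with ⟨c, hc⟩ | ⟨c, hc⟩
                    · exact Or.inr (Or.inr (Or.inr (Or.inr (Or.inr (Or.inr (Or.inr (Or.inr
                        (Or.inr ⟨(y - 6).toNat / 2, by omega, by omega⟩))))))))
                    · exact Or.inr (Or.inr (Or.inr (Or.inr (Or.inr (Or.inr (Or.inr (Or.inr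
                        (Or.inl ⟨(y - 5).toNat / 2, by omega, by omega⟩))))))))
  rcases hm with hm | hm
  · refine ⟨cycE m, ⟨?_, ?_, ?_⟩, ?_, ?_⟩
    · intro i hi
      simp only [Set.mem_Ico] at hi
      simp only [Set.mem_Icc]
      have := cycE_spec m i
      omega
    · intro i hi j hj hij
      simp only [Set.mem_Ico] at hi hj
      have h1 := cycE_spec m i
      have h2 := cycE_spec m j
      omega
    · intro y hy
      simp only [Set.mem_Icc] at hy
      rcases hcase y hy.1 hy.2 with h | h | h | h | h | h | h | h | ⟨t, h1, h2⟩ | ⟨t, h1, h2⟩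
      · exact ⟨2 * m - 3, by simp only [Set.mem_Ico]; omega,
          by have := cycE_spec m (2 * m - 3); omega⟩
      · exact ⟨2 * m - 1, by simp only [Set.mem_Ico]; omega,
          by have := cycE_spec m (2 * m - 1); omega⟩
      · exact ⟨2 * m - 4, by simp only [Set.mem_Ico]; omega,
          by have := cycE_spec m (2 * m - 4); omega⟩
      · exact ⟨2 * m - 2, by simp only [Set.mem_Ico]; omega,
          by have := cycE_spec m (2 * m - 2); omega⟩
      · exact ⟨m - 3, by simp only [Set.mem_Ico]; omega,
          by have := cycE_spec m (m - 3); omega⟩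
      · exact ⟨m - 1, by simp only [Set.mem_Ico]; omega,
          by have := cycE_spec m (m - 1); omega⟩
      · exact ⟨m - 4, by simp only [Set.mem_Ico]; omega,
          by have := cycE_spec m (m - 4); omega⟩
      · exact ⟨m - 2, by simp only [Set.mem_Ico]; omega,
          by have := cycE_spec m (m - 2); omega⟩
      · exact ⟨t, by simp only [Set.mem_Ico]; omega,
          by have := cycE_spec m t; omega⟩
      · exact ⟨2 * m - 5 - t, by simp only [Set.mem_Ico]; omega,
          by have := cycE_spec m (2 * m - 5 - t); omega⟩
    · intro i hi
      have h1 := cycE_spec m i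
      have h2 := cycE_spec m (i + 1)
      omega
    · have h1 := cycE_spec m (n - 1)
      have h2 := cycE_spec m 0
      omega
  · refine ⟨cycO m, ⟨?_, ?_, ?_⟩, ?_, ?_⟩
    · intro i hi
      simp only [Set.mem_Ico] at hi
      simp only [Set.mem_Icc]
      have := cycO_spec m i
      omega
    · intro i hi j hj hij
      simp only [Set.mem_Ico] at hi hj
      have h1 := cycO_spec m i
      have h2 := cycO_spec m j
      omega
    · intro y hy
      simp only [Set.mem_Icc] at hy
      rcases hcase y hy.1 hy.2 with h | h | h | h | h | h | h | h | ⟨t, h1, h2⟩ | ⟨t, h1, h2⟩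
      · exact ⟨2 * m - 2, by simp only [Set.mem_Ico]; omega,
          by have := cycO_spec m (2 * m - 2); omega⟩
      · exact ⟨2 * m, by simp only [Set.mem_Ico]; omega,
          by have := cycO_spec m (2 * m); omega⟩
      · exact ⟨2 * m - 3, by simp only [Set.mem_Ico]; omega,
          by have := cycO_spec m (2 * m - 3); omega⟩
      · exact ⟨2 * m - 1, by simp only [Set.mem_Ico]; omega,
          by have := cycO_spec m (2 * m - 1); omega⟩
      · exact ⟨m - 1, by simp only [Set.mem_Ico]; omega,
          by have := cycO_spec m (m - 1); omega⟩
      · exact ⟨m - 3, by simp only [Set.mem_Ico]; omega,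
          by have := cycO_spec m (m - 3); omega⟩
      · exact ⟨m, by simp only [Set.mem_Ico]; omega,
          by have := cycO_spec m m; omega⟩
      · exact ⟨m - 2, by simp only [Set.mem_Ico]; omega,
          by have := cycO_spec m (m - 2); omega⟩
      · exact ⟨t, by simp only [Set.mem_Ico]; omega,
          by have := cycO_spec m t; omega⟩
      · exact ⟨2 * m - 4 - t, by simp only [Set.mem_Ico]; omega,
          by have := cycO_spec m (2 * m - 4 - t); omega⟩
    · intro i hi
      have h1 := cycO_spec m i
      have h2 := cycO_spec m (i + 1)
      omega
    · have h1 := cycO_spec m (n - 1)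
      have h2 := cycO_spec m 0
      omega
end

section
/- Let p and q be distinct primes with p + q = n. Then there exists a cyclic permutation a_1, ..., a_n of {1,...,n} with |a_i - a_{i+1}| ∈ {p, q} for all 1 ≤ i ≤ n-1 and |a_n - a_1| ∈ {p, q}. In fact the sequence of residues p, 2p, 3p, ..., np taken modulo n (with representatives in {1,...,n}) is such a cyclic permutation. -/
/-!
Since `p` is coprime to `n = p + q`, the multiples `p, 2p, …, np` are pairwise incongruent
modulo `n`, so their representatives in `{1, …, n}` exhaust that set. Two consecutive
representatives differ by an integer congruent to `p` modulo `n` and of absolute value less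
than `n`, that is by `p` or by `p - n = -q`; the wrap-around step is an ordinary step as well,
because `(n + 1) p ≡ p [MOD n]`.
-/

def residueIcc (n m : ℕ) : ℤ := if m % n = 0 then (n : ℤ) else ((m % n : ℕ) : ℤ)

section residueIcc

variable {n : ℕ}

theorem residueIcc_mem_Icc (hn : 0 < n) (m : ℕ) : residueIcc n m ∈ Set.Icc 1 (n : ℤ) := by
  have := Nat.mod_lt m hn
  unfold residueIcc
  split_ifs <;> constructor <;> omega

theorem residueIcc_modEq (n m : ℕ) : residueIcc n m ≡ m [ZMOD n] := by
  unfold residueIcc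
  split_ifs with h
  · exact (Int.modEq_zero_iff_dvd.mpr dvd_rfl).trans
      (Int.modEq_zero_iff_dvd.mpr (Int.natCast_dvd_natCast.mpr (Nat.dvd_of_mod_eq_zero h))).symm
  · rw [Int.natCast_mod]
    exact Int.mod_modEq _ _

theorem modEq_of_residueIcc_eq {a b : ℕ} (h : residueIcc n a = residueIcc n b) :
    a ≡ b [MOD n] :=
  Int.natCast_modEq_iff.mp <| (residueIcc_modEq n a).symm.trans (h ▸ residueIcc_modEq n b)

theorem residueIcc_mul_bijOn {p : ℕ} (hp : p.Coprime n) :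
    Set.BijOn (fun i ↦ residueIcc n ((i + 1) * p)) (Set.Ico 0 n) (Set.Icc 1 (n : ℤ)) := by
  rcases Nat.eq_zero_or_pos n with rfl | hn
  · simp
  have hmaps : Set.MapsTo (fun i ↦ residueIcc n ((i + 1) * p)) (Set.Ico 0 n)
      (Set.Icc 1 (n : ℤ)) := fun i _ ↦ residueIcc_mem_Icc hn _
  have hinj : Set.InjOn (fun i ↦ residueIcc n ((i + 1) * p)) (Set.Ico 0 n) := by
    intro i hi j hj hij
    have hsucc := Nat.ModEq.cancel_right_of_coprime (Nat.coprime_comm.mp hp)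
      (modEq_of_residueIcc_eq hij)
    exact (Nat.ModEq.add_right_cancel' 1 hsucc).eq_of_lt_of_lt hi.2 hj.2
  have hsurj := Finset.surjOn_of_injOn_of_card_le (s := Finset.Ico 0 n)
    (t := Finset.Icc 1 (n : ℤ)) _ (by rwa [Finset.coe_Ico, Finset.coe_Icc])
    (by rwa [Finset.coe_Ico]) (by simp)
  rw [Finset.coe_Ico, Finset.coe_Icc] at hsurj
  exact ⟨hmaps, hinj, hsurj⟩

theorem residueIcc_congr {a b : ℕ} (h : a ≡ b [MOD n]) : residueIcc n a = residueIcc n b := by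
  unfold residueIcc
  rw [h]

theorem natAbs_sub_eq_or_of_modEq {x y : ℤ} {d : ℕ} (hx : x ∈ Set.Icc 1 (n : ℤ))
    (hy : y ∈ Set.Icc 1 (n : ℤ)) (hd : d ≤ n) (h : y ≡ x + d [ZMOD n]) :
    (x - y).natAbs = d ∨ (x - y).natAbs = n - d := by
  obtain ⟨k, hk⟩ := Int.modEq_iff_dvd.mp h
  obtain ⟨hx1, hxn⟩ := hx
  obtain ⟨hy1, hyn⟩ := hy
  have hk0 : 0 ≤ k := by nlinarith
  have hk1 : k ≤ 1 := by nlinarith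
  obtain rfl | rfl : k = 0 ∨ k = 1 := by omega
  · left; omega
  · right; omega

theorem natAbs_residueIcc_sub_residueIcc_add {p : ℕ} (hn : 0 < n) (hp : p ≤ n) (m : ℕ) :
    (residueIcc n m - residueIcc n (m + p)).natAbs = p ∨
      (residueIcc n m - residueIcc n (m + p)).natAbs = n - p := by
  refine natAbs_sub_eq_or_of_modEq (residueIcc_mem_Icc hn m) (residueIcc_mem_Icc hn _) hp ?_
  refine (residueIcc_modEq n (m + p)).trans ?_
  push_cast
  exact (residueIcc_modEq n m).symm.add_right _

end residueIcc

/-- If `p` and `q` are distinct primes with `p + q = n`, then the sequence of residues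
`p, 2p, ..., np` modulo `n`, with representatives taken in `{1,...,n}`, is a cyclic
permutation of `{1,...,n}` all of whose consecutive absolute differences (including the
wrap-around one) are `p` or `q`. -/
theorem ham_cycle_two_primes (p q n : ℕ) (hp : p.Prime) (hq : q.Prime)
    (hpq : p ≠ q) (hn : p + q = n) :
    let a : ℕ → ℤ := fun i => if ((i + 1) * p) % n = 0 then (n : ℤ) else (((i + 1) * p) % n : ℕ)
    Set.BijOn a (Set.Ico 0 n) (Set.Icc 1 (n : ℤ)) ∧
      (∀ i, i + 1 < n → (a i - a (i + 1)).natAbs = p ∨ (a i - a (i + 1)).natAbs = q) ∧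
      ((a (n - 1) - a 0).natAbs = p ∨ (a (n - 1) - a 0).natAbs = q) := by
  intro a
  have hpn : p < n := by have := hq.two_le; omega
  have hqn : q = n - p := by omega
  have hcop : p.Coprime n := by
    rw [← hn, add_comm]
    exact Nat.coprime_add_self_right.mpr ((Nat.coprime_primes hp hq).mpr hpq)
  have step (m : ℕ) := hqn ▸ natAbs_residueIcc_sub_residueIcc_add (by omega) hpn.le m
  refine ⟨residueIcc_mul_bijOn hcop, fun i _ ↦ ?_, ?_⟩
  · have h := step ((i + 1) * p)
    rw [← add_one_mul] at h
    exact h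
  · have hwrap : (n - 1 + 1) * p + p ≡ (0 + 1) * p [MOD n] := by
      simp [Nat.sub_add_cancel (show 1 ≤ n by omega), Nat.ModEq]
    have h := step ((n - 1 + 1) * p)
    rw [residueIcc_congr hwrap] at h
    exact h
end

section
/- If (p, p+2) is a twin prime pair, then the prime difference graph G_{p+2} contains a Hamilton cycle all of whose edges have difference 2 or p. -/
/-- If `(p, p + 2)` is a twin prime pair, then `G_{p+2}` contains a Hamilton cycle all
of whose edges have difference `2` or `p`. -/
theorem ham_cycle_twin_primes (p : ℕ) (hp : p.Prime) (hp2 : (p + 2).Prime) :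
    ∃ a : ℕ → ℤ, Set.BijOn a (Set.Ico 0 (p + 2)) (Set.Icc 1 ((p : ℤ) + 2)) ∧
      (∀ i, i + 1 < p + 2 → (a i - a (i + 1)).natAbs = 2 ∨ (a i - a (i + 1)).natAbs = p) ∧
      ((a (p + 2 - 1) - a 0).natAbs = 2 ∨ (a (p + 2 - 1) - a 0).natAbs = p) := by
  have hpne : p ≠ 2 := by rintro rfl; norm_num at hp2
  obtain ⟨k, hk⟩ := hp.odd_of_ne_two hpne
  subst hk
  refine ⟨fun i => if i ≤ k + 1 then 2 * (i : ℤ) + 1 else 2 * (i : ℤ) - 2 * k - 2,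
    ⟨?_, ?_, ?_⟩, ?_, ?_⟩
  · intro i hi
    simp only [Set.mem_Ico] at hi
    simp only [Set.mem_Icc]
    split_ifs with h <;> push_cast <;> omega
  · intro i hi j hj h
    simp only [Set.mem_Ico] at hi hj
    simp only at h
    split_ifs at h <;> omega
  · intro y hy
    simp only [Set.mem_Icc] at hy
    obtain ⟨n, rfl⟩ : ∃ n : ℕ, y = (n : ℤ) :=
      ⟨y.toNat, (Int.toNat_of_nonneg (by linarith [hy.1])).symm⟩
    rcases Nat.even_or_odd n with ⟨m, hm⟩ | ⟨m, hm⟩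
    · refine ⟨m + k + 1, ?_, ?_⟩
      · simp only [Set.mem_Ico]; omega
      · simp only; rw [if_neg (by omega)]; push_cast; omega
    · refine ⟨m, ?_, ?_⟩
      · simp only [Set.mem_Ico]; omega
      · simp only; rw [if_pos (by omega)]; omega
  · intro i hi
    simp only
    split_ifs <;> omega
  · simp only
    split_ifs <;> omega
end

section
/- If n = p_1 + q_1 = p_2 + q_2 where p_1, q_1, p_2, q_2 are four pairwise distinct primes, then the prime difference graph G_n contains two edge-disjoint Hamilton cycles. -/
/-- The set of (unordered) edges of the cycle `a 0, ..., a (n-1), a 0`. -/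
def cycleEdges (n : ℕ) (a : ℕ → ℤ) : Set (Sym2 ℤ) :=
  {e | ∃ i < n, e = s(a i, a ((i + 1) % n))}

/-- The basic cycle construction: walk by steps of `p` modulo `n`. -/
noncomputable def primeCycle (n p : ℕ) : ℕ → ℤ := fun i => 1 + ((i * p % n : ℕ) : ℤ)

lemma primeCycle_step {n p q : ℕ} (hp : p.Prime) (hq : q.Prime) (h : p + q = n) :
    ∀ i < n, ((primeCycle n p i - primeCycle n p ((i + 1) % n)).natAbs = p ∨
      (primeCycle n p i - primeCycle n p ((i + 1) % n)).natAbs = q) := by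
  have hn : 0 < n := by have := hp.pos; omega
  have hpn : p < n := by have := hq.two_le; omega
  have hqn : q < n := by have := hp.two_le; omega
  intro i hi
  rcases lt_or_ge (i + 1) n with hlt | hge
  · rw [Nat.mod_eq_of_lt hlt]
    set r := i * p % n with hr
    have hrn : r < n := Nat.mod_lt _ hn
    have hstep : (i + 1) * p % n = (r + p) % n := by
      rw [add_mul, one_mul, Nat.add_mod, Nat.mod_eq_of_lt hpn, ← hr]
    rcases lt_or_ge (r + p) n with h2 | h2
    · left
      have : primeCycle n p i - primeCycle n p (i + 1) = -(p : ℤ) := by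
        simp only [primeCycle, hstep, Nat.mod_eq_of_lt h2, ← hr]
        push_cast; ring
      rw [this]; simp
    · right
      have hmod : (r + p) % n = r + p - n := by
        rw [Nat.mod_eq_sub_mod h2, Nat.mod_eq_of_lt (by omega)]
      have : primeCycle n p i - primeCycle n p (i + 1) = (q : ℤ) := by
        simp only [primeCycle, hstep, hmod, ← hr]
        have : ((r + p - n : ℕ) : ℤ) = (r : ℤ) + p - n := by omega
        rw [this]
        have : (n : ℤ) = p + q := by exact_mod_cast h.symm
        rw [this]; ring
      rw [this]; simp
  · have hin : i = n - 1 := by omega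
    have hi1 : (i + 1) % n = 0 := by
      have : i + 1 = n := by omega
      simp [this]
    have hcalc : i * p % n = q := by
      have h1 : i * p = n * (p - 1) + q := by
        have hp1 : 1 ≤ p := hp.one_le
        have : i = n - 1 := hin
        subst this
        rw [Nat.sub_one_mul, Nat.mul_sub_one]
        have : n ≤ n * p := Nat.le_mul_of_pos_right n hp.pos
        have : p ≤ n * p := Nat.le_mul_of_pos_left p hn
        omega
      rw [h1, Nat.mul_add_mod, Nat.mod_eq_of_lt hqn]
    right
    have : primeCycle n p i - primeCycle n p ((i + 1) % n) = (q : ℤ) := by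
      simp [primeCycle, hi1, hcalc]
    rw [this]; simp

lemma primeCycle_isHam {n p q : ℕ} (hp : p.Prime) (hq : q.Prime) (hpq : p ≠ q)
    (h : p + q = n) : IsPrimeDiffHamCycle n (primeCycle n p) := by
  have hn : 0 < n := by have := hp.pos; omega
  have hpn : p < n := by have := hq.two_le; omega
  have hco : Nat.Coprime p n := by
    have := (Nat.coprime_primes hp hq).mpr hpq
    rw [← h]; simpa using this
  have hinj : ∀ i < n, ∀ j < n, i * p % n = j * p % n → i = j := by
    intro i hi j hj hij
    have hmeq : i * p ≡ j * p [MOD n] := hij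
    have := Nat.ModEq.cancel_right_of_coprime (by rwa [Nat.gcd_comm]) hmeq
    have := this.eq_of_lt_of_lt hi hj
    exact this
  refine ⟨⟨?_, ?_, ?_⟩, ?_, ?_⟩
  · intro i hi
    have : i * p % n < n := Nat.mod_lt _ hn
    simp only [primeCycle, Set.mem_Icc]
    omega
  · intro i hi j hj hab
    simp only [primeCycle, add_right_inj, Nat.cast_inj] at hab
    exact hinj i (by simpa using hi.2) j (by simpa using hj.2) hab
  · -- surjectivity
    intro y hy
    simp only [Set.mem_Icc] at hy
    set f : Fin n → Fin n := fun i => ⟨i.1 * p % n, Nat.mod_lt _ hn⟩ with hf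
    have hfinj : Function.Injective f := by
      intro ⟨i, hi⟩ ⟨j, hj⟩ hij
      simp only [hf, Fin.mk.injEq] at hij
      exact Fin.ext (hinj i hi j hj hij)
    have hfsurj : Function.Surjective f := Finite.injective_iff_surjective.mp hfinj
    have hm : (y - 1).toNat < n := by omega
    obtain ⟨⟨i, hi⟩, hfi⟩ := hfsurj ⟨(y - 1).toNat, hm⟩
    refine ⟨i, by simpa using hi, ?_⟩
    simp only [hf, Fin.mk.injEq] at hfi
    simp only [primeCycle, hfi]
    omega
  · intro i hi
    have hstep := primeCycle_step hp hq h i (by omega)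
    rw [Nat.mod_eq_of_lt hi] at hstep
    rcases hstep with h' | h' <;> rw [h']
    · exact hp
    · exact hq
  · have hstep := primeCycle_step hp hq h (n - 1) (by omega)
    have : (n - 1 + 1) % n = 0 := by
      have : n - 1 + 1 = n := by omega
      simp [this]
    rw [this] at hstep
    rcases hstep with h' | h' <;> rw [h']
    · exact hp
    · exact hq

lemma primeCycle_edge_diff {n p q : ℕ} (hp : p.Prime) (hq : q.Prime) (h : p + q = n) :
    ∀ e ∈ cycleEdges n (primeCycle n p), ∀ x y : ℤ, e = s(x, y) →
      (x - y).natAbs = p ∨ (x - y).natAbs = q := by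
  rintro e ⟨i, hi, rfl⟩ x y hxy
  have hstep := primeCycle_step hp hq h i hi
  rw [Sym2.eq_iff] at hxy
  rcases hxy with ⟨hx, hy⟩ | ⟨hx, hy⟩
  · rw [hx, hy] at hstep; exact hstep
  · rw [hx, hy] at hstep
    rcases hstep with h' | h' <;> [left; right] <;> omega

/-- If `n` is the sum of two prime pairs consisting of four pairwise distinct primes,
then `G_n` contains two edge-disjoint Hamilton cycles. -/
theorem two_edge_disjoint_ham_cycles (n p₁ q₁ p₂ q₂ : ℕ)
    (hp₁ : p₁.Prime) (hq₁ : q₁.Prime) (hp₂ : p₂.Prime) (hq₂ : q₂.Prime)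
    (hd : [p₁, q₁, p₂, q₂].Pairwise (· ≠ ·))
    (h₁ : p₁ + q₁ = n) (h₂ : p₂ + q₂ = n) :
    ∃ a b : ℕ → ℤ, IsPrimeDiffHamCycle n a ∧ IsPrimeDiffHamCycle n b ∧
      Disjoint (cycleEdges n a) (cycleEdges n b) := by
  simp only [List.pairwise_cons] at hd
  obtain ⟨hA, hB, hC, -⟩ := hd
  have h12 : p₁ ≠ q₁ := hA q₁ (by simp)
  have h13 : p₁ ≠ p₂ := hA p₂ (by simp)
  have h14 : p₁ ≠ q₂ := hA q₂ (by simp)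
  have h23 : q₁ ≠ p₂ := hB p₂ (by simp)
  have h24 : q₁ ≠ q₂ := hB q₂ (by simp)
  have h34 : p₂ ≠ q₂ := hC q₂ (by simp)
  refine ⟨primeCycle n p₁, primeCycle n p₂,
    primeCycle_isHam hp₁ hq₁ h12 h₁, primeCycle_isHam hp₂ hq₂ h34 h₂, ?_⟩
  rw [Set.disjoint_left]
  intro e he hb
  induction e using Sym2.ind with
  | _ x y =>
    have d1 := primeCycle_edge_diff hp₁ hq₁ h₁ _ he x y rfl
    have d2 := primeCycle_edge_diff hp₂ hq₂ h₂ _ hb x y rfl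
    omega
end

section
/- For every positive integer t, there exists an integer n such that the prime difference graph G_n contains t pairwise edge-disjoint Hamilton cycles. -/
/-!
Green–Tao is more than needed: it suffices to find `n` with `t` representations `n = p + q`
by primes `p < q`. For each of them, `j ↦ j p mod n` (shifted to `{1, …, n}`) is a Hamilton
cycle, as `p` is coprime to `n`, and each of its steps has length `p` or `q`; distinct
representations thus give cycles whose edge lengths, hence edges, are disjoint. Such an `n`
exists by pigeonhole: the `π(N)²` pairs of primes up to `N` have sums in `[0, 2N]`, and
Chebyshev's bound `2 ^ N ≤ (N + 1) ^ (π N + 1)` makes `π(N)² / N` unbounded.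
-/

open Finset
open scoped Nat.Prime

def stepCycle (n p j : ℕ) : ℤ := (j * p % n + 1 : ℕ)

lemma stepCycle_mod (n p j : ℕ) : stepCycle n p (j % n) = stepCycle n p j := by
  simp only [stepCycle, Nat.mod_mul_mod]

lemma natAbs_stepCycle_sub_succ {n p : ℕ} (hpn : p ≤ n) (j : ℕ) :
    (stepCycle n p j - stepCycle n p (j + 1)).natAbs ∈ ({p, n - p} : Set ℕ) := by
  rcases Nat.eq_zero_or_pos n with rfl | hn
  · obtain rfl : p = 0 := by omega
    simp [stepCycle]
  have hstep : (j + 1) * p % n = (j * p % n + p) % n := by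
    rw [add_one_mul, Nat.mod_add_mod]
  have hr : j * p % n < n := Nat.mod_lt _ hn
  simp only [stepCycle, hstep, Set.mem_insert_iff, Set.mem_singleton_iff]
  generalize j * p % n = r at hr ⊢
  rcases lt_or_ge (r + p) n with h | h
  · rw [Nat.mod_eq_of_lt h]
    omega
  · rw [Nat.mod_eq_sub_mod h, Nat.mod_eq_of_lt (by omega)]
    omega

lemma stepCycle_bijOn {n p : ℕ} (hcop : p.Coprime n) :
    Set.BijOn (stepCycle n p) (Set.Ico 0 n) (Set.Icc 1 (n : ℤ)) := by
  have hmaps : Set.MapsTo (stepCycle n p) (Set.Ico 0 n) (Set.Icc 1 (n : ℤ)) := by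
    intro j hj
    have : j * p % n < n := Nat.mod_lt _ (Nat.zero_lt_of_lt hj.2)
    simp only [stepCycle, Set.mem_Icc]
    omega
  have hinj : Set.InjOn (stepCycle n p) (Set.Ico 0 n) := by
    intro i hi j hj hij
    have hmod : i * p ≡ j * p [MOD n] := by
      simp only [stepCycle] at hij
      unfold Nat.ModEq
      omega
    simpa [Nat.ModEq, Nat.mod_eq_of_lt hi.2, Nat.mod_eq_of_lt hj.2] using
      hmod.cancel_right_of_coprime (Nat.coprime_comm.1 hcop)
  refine ⟨hmaps, hinj, ?_⟩
  rw [← Finset.coe_Ico, ← Finset.coe_Icc] at *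
  exact Finset.surjOn_of_injOn_of_card_le _ hmaps hinj (by simp)

lemma isPrimeDiffHamCycle_stepCycle {n p : ℕ} (hp : p.Prime) (hq : (n - p).Prime)
    (hne : p ≠ n - p) : IsPrimeDiffHamCycle n (stepCycle n p) := by
  have hpn : p < n := by have := hq.two_le; omega
  have hcop : p.Coprime n := by
    have := (Nat.coprime_primes hp hq).2 hne
    rwa [← Nat.coprime_add_self_right, Nat.sub_add_cancel hpn.le] at this
  have hstep (j : ℕ) : (stepCycle n p j - stepCycle n p (j + 1)).natAbs.Prime := by
    rcases natAbs_stepCycle_sub_succ hpn.le j with h | h <;> rw [h] <;> assumption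
  have hwrap : stepCycle n p (n - 1 + 1) = stepCycle n p 0 := by
    rw [Nat.sub_add_cancel (by omega), ← stepCycle_mod, Nat.mod_self]
  exact ⟨stepCycle_bijOn hcop, fun j _ => hstep j, hwrap ▸ hstep (n - 1)⟩

def edgeLength : Sym2 ℤ → ℕ :=
  Sym2.lift ⟨fun x y => (x - y).natAbs, fun x y => by dsimp only; omega⟩

lemma cycleEdges_stepCycle_subset {n p : ℕ} (hpn : p ≤ n) :
    cycleEdges n (stepCycle n p) ⊆ edgeLength ⁻¹' {p, n - p} := by
  rintro _ ⟨j, -, rfl⟩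
  rw [stepCycle_mod]
  exact natAbs_stepCycle_sub_succ hpn j

lemma disjoint_cycleEdges_stepCycle {n p p' : ℕ} (hp : 2 * p < n) (hp' : 2 * p' < n)
    (hne : p ≠ p') :
    Disjoint (cycleEdges n (stepCycle n p)) (cycleEdges n (stepCycle n p')) := by
  refine .mono (cycleEdges_stepCycle_subset (by omega)) (cycleEdges_stepCycle_subset (by omega))
    (.preimage _ ?_)
  simp only [Set.disjoint_insert_left, Set.disjoint_insert_right, Set.disjoint_singleton,
    Set.mem_insert_iff, Set.mem_singleton_iff]
  omega

lemma two_pow_le_succ_pow_primeCounting_succ (N : ℕ) : 2 ^ N ≤ (N + 1) ^ (π N + 1) := by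
  have hlcm : N.lcmUpto ≤ (N + 1) ^ π N := by
    rw [Nat.lcmUpto_eq_prod_pow_log, ← Nat.primesLE_card_eq_primeCounting, ← prod_const]
    refine prod_le_prod' fun p hp => ?_
    have hpN := Nat.le_of_mem_primesLE hp
    have := Nat.pow_log_le_self p (show N ≠ 0 by have := Nat.two_le_of_mem_primesLE hp; omega)
    omega
  calc 2 ^ N ≤ (N + 1) * N.lcmUpto := Chebyshev.two_pow_le_mul_lcmUpto N
    _ ≤ (N + 1) * (N + 1) ^ π N := Nat.mul_le_mul_left _ hlcm
    _ = (N + 1) ^ (π N + 1) := by ring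

lemma exists_mul_succ_le_primeCounting_sq (C : ℕ) : ∃ N, C * (N + 1) ≤ π N ^ 2 := by
  -- `N = 4 ^ b - 1` and `k = 2 ^ b * C` satisfy `(N + 1) ^ k = 2 ^ (2 b k) < 2 ^ N`,
  -- which forces `k ≤ π N`.
  set b := 2 * C + 4
  set x := 2 ^ b
  have hx : 2 * b * C + 2 ≤ x := by
    have hC := Nat.lt_two_pow_self (n := C)
    simp only [x, b]
    rw [pow_add, pow_mul']
    nlinarith
  have hN : x ^ 2 - 1 + 1 = x ^ 2 := Nat.sub_add_cancel (Nat.one_le_pow _ _ (by omega))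
  have hk : x * C ≤ π (x ^ 2 - 1) := by
    by_contra! hlt
    have hexp : 2 * b * (x * C) < x ^ 2 - 1 := by
      have : 2 * b * C * x + 2 * x ≤ x * x := Nat.mul_le_mul_right x hx |>.trans_eq' (by ring)
      rw [sq, show 2 * b * (x * C) = 2 * b * C * x by ring]
      omega
    have := calc 2 ^ (x ^ 2 - 1)
        ≤ (x ^ 2) ^ (π (x ^ 2 - 1) + 1) := hN ▸ two_pow_le_succ_pow_primeCounting_succ _
      _ ≤ (x ^ 2) ^ (x * C) := Nat.pow_le_pow_right (by positivity) hlt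
      _ = 2 ^ (2 * b * (x * C)) := by rw [← pow_mul, ← pow_mul]; ring_nf
      _ < 2 ^ (x ^ 2 - 1) := Nat.pow_lt_pow_right (by norm_num) hexp
    exact lt_irrefl _ this
  refine ⟨x ^ 2 - 1, ?_⟩
  calc C * (x ^ 2 - 1 + 1) = C * x ^ 2 := by rw [hN]
    _ ≤ (x * C) ^ 2 := by nlinarith [Nat.le_self_pow two_ne_zero C]
    _ ≤ π (x ^ 2 - 1) ^ 2 := Nat.pow_le_pow_left hk 2

def smallerGoldbachSummands (n : ℕ) : Finset ℕ :=
  {p ∈ range n | p.Prime ∧ (n - p).Prime ∧ 2 * p < n}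

lemma card_filter_antidiagonal_prime_le (n : ℕ) :
    #{x ∈ antidiagonal n | x.1.Prime ∧ x.2.Prime} ≤ 2 * #(smallerGoldbachSummands n) + 1 := by
  set S := smallerGoldbachSummands n
  calc #{x ∈ antidiagonal n | x.1.Prime ∧ x.2.Prime}
      ≤ #((S ∪ S.image (n - ·) ∪ {n / 2}).image fun p => (p, n - p)) := by
        refine card_le_card fun x hx => ?_
        simp only [mem_filter, HasAntidiagonal.mem_antidiagonal] at hx
        obtain ⟨rfl, hp, hq⟩ := hx
        simp only [mem_image, mem_union, mem_singleton, S, smallerGoldbachSummands, mem_filter,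
          mem_range]
        refine ⟨x.1, ?_, by ext <;> simp⟩
        rcases lt_trichotomy (2 * x.1) (x.1 + x.2) with h | h | h
        · exact .inl (.inl ⟨by omega, hp, by simpa using hq, h⟩)
        · exact .inr (by omega)
        · refine .inl (.inr ⟨x.2, ⟨by omega, hq, by simpa using hp, by omega⟩, by omega⟩)
    _ ≤ #(S ∪ S.image (n - ·) ∪ {n / 2}) := card_image_le
    _ ≤ #S + #S + 1 :=
        (card_union_le _ _).trans (add_le_add ((card_union_le _ _).trans
          (Nat.add_le_add_left card_image_le _)) (card_singleton _).le)
    _ = 2 * #S + 1 := by ring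

lemma exists_le_card_smallerGoldbachSummands (t : ℕ) :
    ∃ n, t ≤ #(smallerGoldbachSummands n) := by
  obtain ⟨N, hN⟩ := exists_mul_succ_le_primeCounting_sq (2 * (2 * t + 1))
  have hmaps : ∀ x ∈ Nat.primesLE N ×ˢ Nat.primesLE N, x.1 + x.2 ∈ range (2 * N + 1) := by
    intro x hx
    have := Nat.le_of_mem_primesLE (mem_product.1 hx).1
    have := Nat.le_of_mem_primesLE (mem_product.1 hx).2
    rw [mem_range]
    omega
  have hcard : #(range (2 * N + 1)) * (2 * t + 1) ≤ #(Nat.primesLE N ×ˢ Nat.primesLE N) := by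
    rw [card_range, card_product, Nat.primesLE_card_eq_primeCounting, ← sq]
    nlinarith
  obtain ⟨n, -, hn⟩ :=
    exists_le_card_fiber_of_mul_le_card_of_maps_to hmaps (nonempty_range_iff.2 (by omega)) hcard
  have hfiber : #{x ∈ Nat.primesLE N ×ˢ Nat.primesLE N | x.1 + x.2 = n} ≤
      #{x ∈ antidiagonal n | x.1.Prime ∧ x.2.Prime} := by
    refine card_le_card fun x hx => ?_
    simp only [mem_filter, mem_product, HasAntidiagonal.mem_antidiagonal] at hx ⊢
    exact ⟨hx.2, Nat.prime_of_mem_primesLE hx.1.1, Nat.prime_of_mem_primesLE hx.1.2⟩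
  exact ⟨n, by have := card_filter_antidiagonal_prime_le n; omega⟩

theorem many_edge_disjoint_ham_cycles_general (t : ℕ) :
    ∃ n : ℕ, ∃ a : Fin t → (ℕ → ℤ),
      (∀ i, IsPrimeDiffHamCycle n (a i)) ∧
      (∀ i j, i ≠ j → Disjoint (cycleEdges n (a i)) (cycleEdges n (a j))) := by
  obtain ⟨n, hn⟩ := exists_le_card_smallerGoldbachSummands t
  obtain ⟨p⟩ : Nonempty (Fin t ↪ smallerGoldbachSummands n) :=
    Function.Embedding.nonempty_of_card_le (by simpa using hn)
  have hp (i : Fin t) : (p i : ℕ).Prime ∧ (n - p i).Prime ∧ 2 * p i < n := by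
    have := (p i).2
    simp only [smallerGoldbachSummands, mem_filter] at this
    exact this.2
  refine ⟨n, fun i => stepCycle n (p i), fun i => ?_, fun i j hij => ?_⟩
  · exact isPrimeDiffHamCycle_stepCycle (hp i).1 (hp i).2.1 (by have := (hp i).2.2; omega)
  · exact disjoint_cycleEdges_stepCycle (hp i).2.2 (hp j).2.2
      fun h => hij (p.injective (Subtype.ext h))

/-- For every `t ≥ 1` there is an `n` such that `G_n` contains `t` pairwise
edge-disjoint Hamilton cycles. -/
theorem many_edge_disjoint_ham_cycles (t : ℕ) (ht : 1 ≤ t) :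
    ∃ n : ℕ, ∃ a : Fin t → (ℕ → ℤ),
      (∀ i, IsPrimeDiffHamCycle n (a i)) ∧
      (∀ i j, i ≠ j → Disjoint (cycleEdges n (a i)) (cycleEdges n (a j))) :=
  many_edge_disjoint_ham_cycles_general t
end
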